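/- arXiv:1603.05280 — 2 statements merged into one kernel-verified Lean document; each statement's English description precedes it below -/
import Mathlib

section
/- Let H be a real Hilbert space, Ω ⊆ H open, F : Ω → H continuously Fréchet differentiable, T : H ⇉ H maximal monotone, x* ∈ Ω with 0 ∈ F(x*) + T(x*), F'(x*) positive-semidefinite, and F̂'(x*) := (F'(x*)+F'(x*)*)/2 boundedly invertible. Suppose there exists K > 0 with ‖F̂'(x*)⁻¹‖ · ‖F'(x) − F'(y)‖ ≤ K‖x − y‖ for all x, y ∈ Ω. Let κ := sup{t > 0 : B(x*, t) ⊂ Ω} and r := min{κ, 2/(3K)}. Then for any sequence {x_k} with x₀ ∈ B(x*, r) \ {x*} satisfying 0 ∈ F(x_k) + F'(x_k)(x_{k+1} − x_k) + T(x_{k+1}) for all k, and for t₀ := ‖x* − x₀‖, t_{k+1} := (K/2)t_k²/(1 − K t_k): the sequence {t_k} is strictly decreasing, contained in (0, r), and converges to 0; {x_k} is contained in B(x*, r) and converges to x*, which is the unique solution of 0 ∈ F(x) + T(x) in B(x*, σ̄) with σ̄ := min{r, 2/K}; moreover ‖x* − x_{k+1}‖ ≤ (K/2)·(1/(1 − K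 t_k))·‖x_k − x*‖² ≤ (K/2)·(1/(1 − K‖x₀ − x*‖))·‖x_k − x*‖² for all k. -/
/-!
Write `e = x_{k+1} - x*` and `s = ‖x_k - x*‖`. Testing monotonicity of `T` on the pairs
`(x*, -F x*)` and `(x_{k+1}, -F x_k - F'(x_k) (x_{k+1} - x_k))`, the Taylor remainder of `F`
at `x_k` is `O(s²)` and `F'(x_k) - F'(x*)` is `O(s)` by the Lipschitz bound, while
`‖e‖² ≤ ‖F̂'(x*)⁻¹‖ ⟪F'(x*) e, e⟫` by Cauchy–Schwarz for the positive operator `F̂'(x*)`.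
Together, `(1 - K s) ‖e‖ ≤ (K/2) s²`. The scalar recursion `t_{k+1} = (K/2) t_k² / (1 - K t_k)`
then majorizes `‖x_k - x*‖`, and it contracts to `0` because `K t₀ < 2/3`. A solution `y` near
`x*` is a fixed point of the Newton step, so the same estimate with `s = ‖e‖` forces `y = x*`.
-/

open RealInnerProductSpace Filter Metric Set

/-- A set-valued operator `T : H ⇉ H` is monotone if `⟨u - v, y - x⟩ ≥ 0` whenever
`u ∈ T y` and `v ∈ T x`; it is maximal monotone if moreover every pair `(x, u)` that is
monotonically related to the graph of `T` belongs to the graph of `T`. -/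
def IsMaximalMonotone {H : Type*} [NormedAddCommGroup H] [InnerProductSpace ℝ H]
    (T : H → Set H) : Prop :=
  (∀ x y u v : H, u ∈ T y → v ∈ T x → 0 ≤ ⟪u - v, y - x⟫) ∧
  (∀ x u : H, (∀ y v : H, v ∈ T y → 0 ≤ ⟪u - v, x - y⟫) → u ∈ T x)

open Topology

theorem Metric.ball_subset_of_le_sSup {α : Type*} [PseudoMetricSpace α] {s : Set α} {x : α}
    {r : ℝ} (hr : 0 < r) (h : r ≤ sSup {u : ℝ | 0 < u ∧ ball x u ⊆ s}) : ball x r ⊆ s := by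
  have hne : {u : ℝ | 0 < u ∧ ball x u ⊆ s}.Nonempty := by
    by_contra hempty
    rw [not_nonempty_iff_eq_empty.1 hempty, Real.sSup_empty] at h
    linarith
  intro y hy
  obtain ⟨u, hu, hyu⟩ := exists_lt_of_lt_csSup hne ((mem_ball.1 hy).trans_le h)
  exact hu.2 (mem_ball.2 hyu)

theorem zero_mem_image_add_left_iff {G : Type*} [AddGroup G] {a : G} {S : Set G} :
    (0 : G) ∈ (fun w => a + w) '' S ↔ -a ∈ S := by
  simp [image_add_left]

theorem Convex.norm_image_sub_sub_fderiv_le_of_lipschitz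
    {E G : Type*} [NormedAddCommGroup E] [NormedSpace ℝ E] [NormedAddCommGroup G] [NormedSpace ℝ G]
    {s : Set E} (hs : Convex ℝ s) {f : E → G} {f' : E → E →L[ℝ] G}
    (hf : ∀ x ∈ s, HasFDerivAt f (f' x) x) {L : ℝ}
    (hlip : ∀ x ∈ s, ∀ y ∈ s, ‖f' x - f' y‖ ≤ L * ‖x - y‖) {x y : E} (hx : x ∈ s) (hy : y ∈ s) :
    ‖f y - f x - f' x (y - x)‖ ≤ L / 2 * ‖y - x‖ ^ 2 := by
  set v := y - x
  have hseg : ∀ t ∈ Icc (0 : ℝ) 1, x + t • v ∈ s := fun t ht => by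
    simpa [v, add_sub_cancel] using hs.add_smul_sub_mem hx hy ht
  have hderiv : ∀ t ∈ Icc (0 : ℝ) 1, HasDerivAt (fun t : ℝ => f (x + t • v) - t • f' x v - f x)
      (f' (x + t • v) v - f' x v) t := fun t ht => by
    have hline : HasDerivAt (fun t : ℝ => x + t • v) v t := by
      simpa using ((hasDerivAt_id t).smul_const v).const_add x
    exact (((hf _ (hseg t ht)).comp_hasDerivAt t hline).sub
      (by simpa using (hasDerivAt_id t).smul_const (f' x v))).sub_const (f x)
  have hbound : ∀ t ∈ Ico (0 : ℝ) 1, ‖f' (x + t • v) v - f' x v‖ ≤ L * ‖v‖ ^ 2 * t := by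
    intro t ht
    have hlip_t : ‖f' (x + t • v) - f' x‖ ≤ L * (t * ‖v‖) := by
      simpa [norm_smul, abs_of_nonneg ht.1] using hlip _ (hseg t ⟨ht.1, ht.2.le⟩) _ hx
    calc ‖f' (x + t • v) v - f' x v‖ ≤ ‖f' (x + t • v) - f' x‖ * ‖v‖ :=
          (f' (x + t • v) - f' x).le_opNorm v
      _ ≤ L * (t * ‖v‖) * ‖v‖ := by gcongr
      _ = L * ‖v‖ ^ 2 * t := by ring
  have hB : ∀ t, HasDerivAt (fun t : ℝ => L * ‖v‖ ^ 2 * (t ^ 2 / 2)) (L * ‖v‖ ^ 2 * t) t :=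
    fun t => by simpa using ((hasDerivAt_pow 2 t).div_const 2).const_mul (L * ‖v‖ ^ 2)
  have hend : f (x + (1 : ℝ) • v) - (1 : ℝ) • f' x v - f x = f y - f x - f' x (y - x) := by
    simp only [one_smul, v, add_sub_cancel]
    abel
  calc ‖f y - f x - f' x (y - x)‖ ≤ L * ‖v‖ ^ 2 * (1 ^ 2 / 2) := hend ▸
        image_norm_le_of_norm_deriv_right_le_deriv_boundary
          (fun t ht => (hderiv t ht).continuousAt.continuousWithinAt)
          (fun t ht => (hderiv t ⟨ht.1, ht.2.le⟩).hasDerivWithinAt) (by simp) hB hbound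
          (right_mem_Icc.2 zero_le_one)
    _ = L / 2 * ‖y - x‖ ^ 2 := by ring

noncomputable def newtonMajorant (K t : ℝ) : ℝ :=
  K / 2 * t ^ 2 / (1 - K * t)

theorem newtonMajorant_pos {K t : ℝ} (hK : 0 < K) (ht : 0 < t) (hKt : K * t < 1) :
    0 < newtonMajorant K t :=
  div_pos (by positivity) (by linarith)

theorem newtonMajorant_lt_self {K t : ℝ} (ht : 0 < t) (hKt : K * t < 2 / 3) :
    newtonMajorant K t < t := by
  rw [newtonMajorant, div_lt_iff₀ (by linarith)]
  nlinarith

theorem newtonMajorant_le_mul {K t t₀ : ℝ} (hK : 0 < K) (ht : 0 ≤ t) (htt₀ : t ≤ t₀)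
    (hKt₀ : K * t₀ < 1) : newtonMajorant K t ≤ K * t₀ / (2 * (1 - K * t₀)) * t := by
  have hKt : K * t ≤ K * t₀ := by gcongr
  calc newtonMajorant K t = K * t / (2 * (1 - K * t)) * t := by
        rw [newtonMajorant]
        field_simp
    _ ≤ K * t₀ / (2 * (1 - K * t₀)) * t := by
        gcongr
        exact mul_nonneg hK.le (ht.trans htt₀)

theorem newtonMajorant_seq_strictAnti_pos_tendsto {K : ℝ} {t : ℕ → ℝ} (hK : 0 < K) (ht₀ : 0 < t 0)
    (hKt₀ : K * t 0 < 2 / 3) (ht : ∀ k, t (k + 1) = newtonMajorant K (t k)) :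
    StrictAnti t ∧ (∀ k, 0 < t k) ∧ Tendsto t atTop (𝓝 0) := by
  have hsucc : ∀ k, 0 < t k → t k ≤ t 0 → 0 < t (k + 1) ∧ t (k + 1) < t k := fun k hpos hle => by
    have hKt : K * t k < 2 / 3 := (mul_le_mul_of_nonneg_left hle hK.le).trans_lt hKt₀
    rw [ht k]
    exact ⟨newtonMajorant_pos hK hpos (by linarith), newtonMajorant_lt_self hpos hKt⟩
  have hbounds : ∀ k, 0 < t k ∧ t k ≤ t 0 := by
    intro k
    induction k with
    | zero => exact ⟨ht₀, le_rfl⟩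
    | succ k ih => exact ⟨(hsucc k ih.1 ih.2).1, (hsucc k ih.1 ih.2).2.le.trans ih.2⟩
  have hanti : StrictAnti t :=
    strictAnti_nat_of_succ_lt fun k => (hsucc k (hbounds k).1 (hbounds k).2).2
  set q := K * t 0 / (2 * (1 - K * t 0))
  have hq₀ : 0 ≤ q := div_nonneg (by positivity) (by linarith)
  have hq₁ : q < 1 := by rw [div_lt_one (by linarith)]; linarith
  have hgeom : ∀ k, t k ≤ q ^ k * t 0 := fun k => le_geom hq₀ k fun j _ => by
    rw [ht j]
    exact newtonMajorant_le_mul hK (hbounds j).1.le (hbounds j).2 (by linarith)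
  refine ⟨hanti, fun k => (hbounds k).1, squeeze_zero (fun k => (hbounds k).1.le) hgeom ?_⟩
  simpa using (tendsto_pow_atTop_nhds_zero_of_lt_one hq₀ hq₁).mul_const (t 0)

theorem le_div_one_sub_of_one_sub_mul_le {K s t e : ℝ} (hK : 0 ≤ K) (he : 0 ≤ e) (hst : s ≤ t)
    (hKt : K * t < 1) (h : (1 - K * s) * e ≤ K / 2 * s ^ 2) :
    e ≤ K / 2 * (1 / (1 - K * t)) * s ^ 2 := by
  have hKst : K * s ≤ K * t := by gcongr
  rw [show K / 2 * (1 / (1 - K * t)) * s ^ 2 = K / 2 * s ^ 2 / (1 - K * t) by ring,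
    le_div_iff₀ (by linarith)]
  nlinarith [mul_nonneg hK he, mul_nonneg (mul_nonneg hK he) (sub_nonneg.2 hst)]

theorem mul_lt_two_thirds_of_lt {K r t : ℝ} (hK : 0 < K) (hrK : r ≤ 2 / (3 * K)) (ht : t < r) :
    K * t < 2 / 3 := by
  calc K * t < K * (2 / (3 * K)) := by gcongr; linarith
    _ = 2 / 3 := by field_simp

theorem eq_zero_of_one_sub_mul_mul_self_le {K s : ℝ} (hs : 0 ≤ s) (hKs : K * s < 2 / 3)
    (h : (1 - K * s) * s ≤ K / 2 * s ^ 2) : s = 0 := by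
  nlinarith

theorem norm_sub_le_newtonMajorant {E : Type*} [SeminormedAddCommGroup E] {x : ℕ → E} {xs : E}
    {t : ℕ → ℝ} {K r : ℝ} (hK : 0 < K) (hrK : r ≤ 2 / (3 * K)) (htr : ∀ k, t k < r)
    (ht₀ : ‖x 0 - xs‖ ≤ t 0) (ht : ∀ k, t (k + 1) = newtonMajorant K (t k))
    (hstep : ∀ k, ‖x k - xs‖ < r →
      (1 - K * ‖x k - xs‖) * ‖x (k + 1) - xs‖ ≤ K / 2 * ‖x k - xs‖ ^ 2) (k : ℕ) :
    ‖x k - xs‖ ≤ t k ∧ ‖x (k + 1) - xs‖ ≤ K / 2 * (1 / (1 - K * t k)) * ‖x k - xs‖ ^ 2 := by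
  have hnext : ∀ k, ‖x k - xs‖ ≤ t k →
      ‖x (k + 1) - xs‖ ≤ K / 2 * (1 / (1 - K * t k)) * ‖x k - xs‖ ^ 2 := fun k hk =>
    le_div_one_sub_of_one_sub_mul_le hK.le (norm_nonneg _) hk
      (by linarith [mul_lt_two_thirds_of_lt hK hrK (htr k)]) (hstep k (hk.trans_lt (htr k)))
  suffices hle : ‖x k - xs‖ ≤ t k from ⟨hle, hnext k hle⟩
  induction k with
  | zero => exact ht₀
  | succ k ih =>
    have hden : 0 < 1 - K * t k := by linarith [mul_lt_two_thirds_of_lt hK hrK (htr k)]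
    calc ‖x (k + 1) - xs‖ ≤ K / 2 * (1 / (1 - K * t k)) * ‖x k - xs‖ ^ 2 := hnext k ih
      _ ≤ K / 2 * (1 / (1 - K * t k)) * t k ^ 2 := by gcongr
      _ = t (k + 1) := by rw [ht k, newtonMajorant]; ring

section InnerProductSpace

variable {H : Type*} [NormedAddCommGroup H] [InnerProductSpace ℝ H]

theorem ContinuousLinearMap.IsPositive.norm_sq_le_opNorm_mul_inner {A G : H →L[ℝ] H}
    (hA : A.IsPositive) (hAG : ∀ x, A (G x) = x) (x : H) : ‖x‖ ^ 2 ≤ ‖G‖ * ⟪A x, x⟫ := by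
  -- `⟪A x, G x⟫ = ‖x‖ ^ 2`, so Cauchy–Schwarz for `⟪A ·, ·⟫` gives `‖x‖ ^ 4 ≤ ⟪A x, x⟫ ⟪x, G x⟫`
  have hCS := LinearMap.BilinForm.apply_mul_apply_le_of_forall_zero_le
    (innerₗ H ∘ₗ (A : H →ₗ[ℝ] H)) hA.inner_nonneg_left x (G x)
  have hxGx : ⟪A x, G x⟫ = ‖x‖ ^ 2 := by
    rw [hA.inner_left_eq_inner_right, hAG, real_inner_self_eq_norm_sq]
  simp only [LinearMap.comp_apply, innerₗ_apply_apply, coe_coe, hAG, hxGx,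
    real_inner_self_eq_norm_sq] at hCS
  have hGx : ⟪x, G x⟫ ≤ ‖G‖ * ‖x‖ ^ 2 := by
    calc ⟪x, G x⟫ ≤ ‖x‖ * ‖G x‖ := real_inner_le_norm _ _
      _ ≤ ‖x‖ * (‖G‖ * ‖x‖) := by gcongr; exact G.le_opNorm x
      _ = ‖G‖ * ‖x‖ ^ 2 := by ring
  rcases (sq_nonneg ‖x‖).eq_or_lt with hx | hx
  · rw [← hx]
    exact mul_nonneg (norm_nonneg G) (hA.inner_nonneg_left x)
  · refine le_of_mul_le_mul_right (hCS.trans ?_) hx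
    calc ⟪A x, x⟫ * ⟪x, G x⟫ ≤ ⟪A x, x⟫ * (‖G‖ * ‖x‖ ^ 2) :=
          mul_le_mul_of_nonneg_left hGx (hA.inner_nonneg_left x)
      _ = ‖G‖ * ⟪A x, x⟫ * ‖x‖ ^ 2 := by ring

theorem ContinuousLinearMap.inner_half_smul_add_adjoint_apply_self [CompleteSpace H]
    (A : H →L[ℝ] H) (x : H) : ⟪((1 / 2 : ℝ) • (A + adjoint A)) x, x⟫ = ⟪A x, x⟫ := by
  simp only [smul_apply, add_apply, real_inner_smul_left, inner_add_left, adjoint_inner_left,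
    real_inner_comm x (A x)]
  ring

theorem ContinuousLinearMap.isPositive_half_smul_add_adjoint [CompleteSpace H] {A : H →L[ℝ] H}
    (hA : ∀ x, 0 ≤ ⟪A x, x⟫) : ((1 / 2 : ℝ) • (A + adjoint A)).IsPositive := by
  have hsa : IsSelfAdjoint (A + adjoint A) := by
    simpa only [star_eq_adjoint] using IsSelfAdjoint.add_star_self A
  refine isPositive_def'.2 ⟨IsSelfAdjoint.smul (by simp) hsa, fun x => ?_⟩
  rw [reApplyInnerSelf, RCLike.re_to_real, inner_half_smul_add_adjoint_apply_self]
  exact hA x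

theorem ContinuousLinearMap.norm_sq_le_opNorm_mul_inner_of_comp_eq_id [CompleteSpace H]
    {A G : H →L[ℝ] H} (hA : ∀ x, 0 ≤ ⟪A x, x⟫)
    (hG : ((1 / 2 : ℝ) • (A + adjoint A)).comp G = ContinuousLinearMap.id ℝ H) (x : H) :
    ‖x‖ ^ 2 ≤ ‖G‖ * ⟪A x, x⟫ := by
  have := (isPositive_half_smul_add_adjoint hA).norm_sq_le_opNorm_mul_inner
    (fun y => congr($hG y)) x
  rwa [inner_half_smul_add_adjoint_apply_self] at this

def IsMonotoneOperator (T : H → Set H) : Prop :=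
  ∀ x y u v : H, u ∈ T y → v ∈ T x → 0 ≤ ⟪u - v, y - x⟫

theorem IsMaximalMonotone.isMonotoneOperator {T : H → Set H} (hT : IsMaximalMonotone T) :
    IsMonotoneOperator T :=
  hT.1

theorem newton_step_error_le {T : H → Set H} (hT : IsMonotoneOperator T) {f : H → H}
    {f' : H → H →L[ℝ] H} {xs a b : H} {c L : ℝ} (hc : 0 ≤ c) (hL : 0 ≤ L)
    (hsol : -f xs ∈ T xs) (hb : -(f a + f' a (b - a)) ∈ T b)
    (hcoer : ∀ e, ‖e‖ ^ 2 ≤ c * ⟪f' xs e, e⟫) (hlip : ‖f' a - f' xs‖ ≤ L * ‖a - xs‖)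
    (htay : ‖f xs - f a - f' a (xs - a)‖ ≤ L / 2 * ‖a - xs‖ ^ 2) :
    (1 - c * L * ‖a - xs‖) * ‖b - xs‖ ≤ c * L / 2 * ‖a - xs‖ ^ 2 := by
  set e := b - xs
  set s := ‖a - xs‖
  set R := f xs - f a - f' a (xs - a)
  have hmono : 0 ≤ ⟪R, e⟫ - ⟪(f' a - f' xs) e, e⟫ - ⟪f' xs e, e⟫ := by
    have hsplit : -(f a + f' a (b - a)) - -f xs = R - (f' a - f' xs) e - f' xs e := by
      rw [show b - a = (xs - a) + e by simp only [e]; abel, map_add,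
        sub_apply]
      simp only [R]
      abel
    simpa only [hsplit, inner_sub_left] using hT xs b _ _ hb hsol
  have hR : ⟪R, e⟫ ≤ L / 2 * s ^ 2 * ‖e‖ :=
    (real_inner_le_norm R e).trans (by gcongr)
  have hD : -⟪(f' a - f' xs) e, e⟫ ≤ L * s * ‖e‖ ^ 2 := by
    calc -⟪(f' a - f' xs) e, e⟫ ≤ ‖(f' a - f' xs) e‖ * ‖e‖ :=
          (neg_le_abs _).trans (abs_real_inner_le_norm _ _)
      _ ≤ L * s * ‖e‖ * ‖e‖ := by
          gcongr
          exact (ContinuousLinearMap.le_opNorm _ _).trans (by gcongr)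
      _ = L * s * ‖e‖ ^ 2 := by ring
  have hquad : ‖e‖ ^ 2 ≤ c * (L / 2 * s ^ 2 * ‖e‖ + L * s * ‖e‖ ^ 2) :=
    (hcoer e).trans (by gcongr; linarith)
  rcases (norm_nonneg e).eq_or_lt with he | he
  · rw [← he, mul_zero]
    positivity
  · refine le_of_mul_le_mul_right ?_ he
    nlinarith

theorem newton_step_error_le_of_convex {T : H → Set H} (hT : IsMonotoneOperator T)
    {s : Set H} (hs : Convex ℝ s) {f : H → H} {f' : H → H →L[ℝ] H}
    (hf : ∀ x ∈ s, HasFDerivAt f (f' x) x) {c K : ℝ} (hc : 0 ≤ c) (hK : 0 ≤ K)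
    (hlip : ∀ x ∈ s, ∀ y ∈ s, c * ‖f' x - f' y‖ ≤ K * ‖x - y‖)
    {xs a b : H} (hxs : xs ∈ s) (ha : a ∈ s) (hsol : -f xs ∈ T xs)
    (hb : -(f a + f' a (b - a)) ∈ T b) (hcoer : ∀ e, ‖e‖ ^ 2 ≤ c * ⟪f' xs e, e⟫) :
    (1 - K * ‖a - xs‖) * ‖b - xs‖ ≤ K / 2 * ‖a - xs‖ ^ 2 := by
  rcases hc.eq_or_lt with rfl | hc
  · have hbxs : ‖b - xs‖ = 0 := pow_eq_zero_iff two_ne_zero |>.1 <|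
      le_antisymm (by simpa using hcoer (b - xs)) (sq_nonneg _)
    rw [hbxs, mul_zero]
    positivity
  have hlipL : ∀ x ∈ s, ∀ y ∈ s, ‖f' x - f' y‖ ≤ K / c * ‖x - y‖ := fun x hx y hy => by
    rw [div_mul_eq_mul_div, le_div_iff₀ hc, mul_comm]
    exact hlip x hx y hy
  have htay := hs.norm_image_sub_sub_fderiv_le_of_lipschitz hf hlipL ha hxs
  rw [norm_sub_rev xs a] at htay
  have := newton_step_error_le hT hc.le (div_nonneg hK hc.le) hsol hb hcoer
    (hlipL a ha xs hxs) htay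
  rwa [mul_div_cancel₀ K hc.ne'] at this

end InnerProductSpace

theorem newton_lipschitz_convergence_general {H : Type*} [NormedAddCommGroup H] [InnerProductSpace ℝ H] [CompleteSpace H]
    (Ω : Set H) (F : H → H) (F' : H → H →L[ℝ] H)
    (hFd : ∀ x ∈ Ω, HasFDerivAt F (F' x) x)
    (xs : H)
    (T : H → Set H) (hT : IsMaximalMonotone T)
    (hsol : (0 : H) ∈ (fun w => F xs + w) '' T xs)
    (hpsd : ∀ y : H, 0 ≤ ⟪(F' xs) y, y⟫)
    (Ahat : H →L[ℝ] H)
    (hAhat : Ahat = (1 / 2 : ℝ) • (F' xs + ContinuousLinearMap.adjoint (F' xs)))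
    (Ginv : H →L[ℝ] H)
    (hGinv2 : Ahat.comp Ginv = ContinuousLinearMap.id ℝ H)
    (K : ℝ) (hK : 0 < K)
    (hlip : ∀ x ∈ Ω, ∀ y ∈ Ω, ‖Ginv‖ * ‖F' x - F' y‖ ≤ K * ‖x - y‖)
    (κ : ℝ) (hκ : κ = sSup {u : ℝ | 0 < u ∧ Metric.ball xs u ⊆ Ω})
    (r : ℝ) (hr : r = min κ (2 / (3 * K)))
    (σbar : ℝ) (hσbar : σbar = min r (2 / K))
    (xseq : ℕ → H) (hx0 : xseq 0 ∈ Metric.ball xs r) (hx0ne : xseq 0 ≠ xs)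
    (hNewton : ∀ k : ℕ, (0 : H) ∈
      (fun w => F (xseq k) + (F' (xseq k)) (xseq (k + 1) - xseq k) + w) '' T (xseq (k + 1)))
    (tseq : ℕ → ℝ) (ht0 : tseq 0 = ‖xs - xseq 0‖)
    (htk : ∀ k : ℕ, tseq (k + 1) = K / 2 * tseq k ^ 2 / (1 - K * tseq k)) :
    StrictAnti tseq ∧ (∀ k : ℕ, tseq k ∈ Set.Ioo (0 : ℝ) r) ∧
      Filter.Tendsto tseq Filter.atTop (nhds 0) ∧
      (∀ k : ℕ, xseq k ∈ Metric.ball xs r) ∧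
      Filter.Tendsto xseq Filter.atTop (nhds xs) ∧
      (∀ y ∈ Metric.ball xs σbar, ((0 : H) ∈ (fun w => F y + w) '' T y ↔ y = xs)) ∧
      ∀ k : ℕ,
        ‖xs - xseq (k + 1)‖ ≤ K / 2 * (1 / (1 - K * tseq k)) * ‖xseq k - xs‖ ^ 2 ∧
          K / 2 * (1 / (1 - K * tseq k)) * ‖xseq k - xs‖ ^ 2 ≤
            K / 2 * (1 / (1 - K * ‖xseq 0 - xs‖)) * ‖xseq k - xs‖ ^ 2 := by
  have ht0' : ‖xseq 0 - xs‖ = tseq 0 := by rw [ht0, norm_sub_rev]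
  have ht0r : tseq 0 < r := by rwa [← ht0', ← dist_eq_norm, ← mem_ball]
  have hr₀ : 0 < r := dist_nonneg.trans_lt hx0
  have hrK : r ≤ 2 / (3 * K) := hr ▸ min_le_right _ _
  have hball : ball xs r ⊆ Ω := ball_subset_of_le_sSup hr₀ (hκ ▸ hr ▸ min_le_left _ _)
  have hcoer : ∀ e, ‖e‖ ^ 2 ≤ ‖Ginv‖ * ⟪F' xs e, e⟫ :=
    ContinuousLinearMap.norm_sq_le_opNorm_mul_inner_of_comp_eq_id hpsd (hAhat ▸ hGinv2)
  have hstep : ∀ a ∈ ball xs r, ∀ b, -(F a + F' a (b - a)) ∈ T b →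
      (1 - K * ‖a - xs‖) * ‖b - xs‖ ≤ K / 2 * ‖a - xs‖ ^ 2 := fun a ha b hb =>
    newton_step_error_le_of_convex hT.isMonotoneOperator (convex_ball xs r)
      (fun x hx => hFd x (hball hx)) (norm_nonneg _) hK.le
      (fun x hx y hy => hlip x (hball hx) y (hball hy))
      (mem_ball_self hr₀) ha (zero_mem_image_add_left_iff.1 hsol) hb hcoer
  obtain ⟨hanti, htpos, httend⟩ := newtonMajorant_seq_strictAnti_pos_tendsto hK
    (ht0' ▸ norm_pos_iff.2 (sub_ne_zero.2 hx0ne)) (mul_lt_two_thirds_of_lt hK hrK ht0r) htk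
  have htr : ∀ k, tseq k < r := fun k => (hanti.antitone k.zero_le).trans_lt ht0r
  have hseq := norm_sub_le_newtonMajorant hK hrK htr ht0'.le htk fun k hk =>
    hstep _ (mem_ball_iff_norm.2 hk) _ (zero_mem_image_add_left_iff.1 (hNewton k))
  have hmem : ∀ k, xseq k ∈ ball xs r :=
    fun k => mem_ball_iff_norm.2 ((hseq k).1.trans_lt (htr k))
  refine ⟨hanti, fun k => ⟨htpos k, htr k⟩, httend, hmem, ?_, fun y hy => ?_, fun k => ⟨?_, ?_⟩⟩
  · exact tendsto_iff_norm_sub_tendsto_zero.2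
      (squeeze_zero (fun _ => norm_nonneg _) (fun k => (hseq k).1) httend)
  · refine ⟨fun hy0 => ?_, fun hys => hys ▸ hsol⟩
    have hyr : ‖y - xs‖ < r := mem_ball_iff_norm.1 (ball_subset_ball (hσbar ▸ min_le_left _ _) hy)
    have hfix := hstep y (mem_ball_iff_norm.2 hyr) y
      (by simpa using zero_mem_image_add_left_iff.1 hy0)
    exact sub_eq_zero.1 (norm_eq_zero.1 (eq_zero_of_one_sub_mul_mul_self_le (norm_nonneg _)
      (mul_lt_two_thirds_of_lt hK hrK hyr) hfix))
  · rw [norm_sub_rev]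
    exact (hseq k).2
  · have hKt₀ := mul_lt_two_thirds_of_lt hK hrK ht0r
    rw [ht0']
    gcongr
    · linarith
    · exact hanti.antitone k.zero_le

theorem newton_lipschitz_convergence {H : Type*} [NormedAddCommGroup H] [InnerProductSpace ℝ H] [CompleteSpace H]
    (Ω : Set H) (hΩ : IsOpen Ω) (F : H → H) (F' : H → H →L[ℝ] H)
    (hFd : ∀ x ∈ Ω, HasFDerivAt F (F' x) x) (hF'c : ContinuousOn F' Ω)
    (xs : H) (hxs : xs ∈ Ω)
    (T : H → Set H) (hT : IsMaximalMonotone T)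
    (hsol : (0 : H) ∈ (fun w => F xs + w) '' T xs)
    (hpsd : ∀ y : H, 0 ≤ ⟪(F' xs) y, y⟫)
    (Ahat : H →L[ℝ] H)
    (hAhat : Ahat = (1 / 2 : ℝ) • (F' xs + ContinuousLinearMap.adjoint (F' xs)))
    (Ginv : H →L[ℝ] H)
    (hGinv1 : Ginv.comp Ahat = ContinuousLinearMap.id ℝ H)
    (hGinv2 : Ahat.comp Ginv = ContinuousLinearMap.id ℝ H)
    (K : ℝ) (hK : 0 < K)
    (hlip : ∀ x ∈ Ω, ∀ y ∈ Ω, ‖Ginv‖ * ‖F' x - F' y‖ ≤ K * ‖x - y‖)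
    (κ : ℝ) (hκ : κ = sSup {u : ℝ | 0 < u ∧ Metric.ball xs u ⊆ Ω})
    (r : ℝ) (hr : r = min κ (2 / (3 * K)))
    (σbar : ℝ) (hσbar : σbar = min r (2 / K))
    (xseq : ℕ → H) (hx0 : xseq 0 ∈ Metric.ball xs r) (hx0ne : xseq 0 ≠ xs)
    (hNewton : ∀ k : ℕ, (0 : H) ∈
      (fun w => F (xseq k) + (F' (xseq k)) (xseq (k + 1) - xseq k) + w) '' T (xseq (k + 1)))
    (tseq : ℕ → ℝ) (ht0 : tseq 0 = ‖xs - xseq 0‖)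
    (htk : ∀ k : ℕ, tseq (k + 1) = K / 2 * tseq k ^ 2 / (1 - K * tseq k)) :
    StrictAnti tseq ∧ (∀ k : ℕ, tseq k ∈ Set.Ioo (0 : ℝ) r) ∧
      Filter.Tendsto tseq Filter.atTop (nhds 0) ∧
      (∀ k : ℕ, xseq k ∈ Metric.ball xs r) ∧
      Filter.Tendsto xseq Filter.atTop (nhds xs) ∧
      (∀ y ∈ Metric.ball xs σbar, ((0 : H) ∈ (fun w => F y + w) '' T y ↔ y = xs)) ∧
      ∀ k : ℕ,
        ‖xs - xseq (k + 1)‖ ≤ K / 2 * (1 / (1 - K * tseq k)) * ‖xseq k - xs‖ ^ 2 ∧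
          K / 2 * (1 / (1 - K * tseq k)) * ‖xseq k - xs‖ ^ 2 ≤
            K / 2 * (1 / (1 - K * ‖xseq 0 - xs‖)) * ‖xseq k - xs‖ ^ 2 :=
  newton_lipschitz_convergence_general Ω F F' hFd xs T hT hsol hpsd Ahat hAhat Ginv hGinv2 K hK hlip
    κ hκ r hr σbar hσbar xseq hx0 hx0ne hNewton tseq ht0 htk
end

section
/- Let H be a real Hilbert space, Ω ⊆ H an open set, and F : Ω → H twice continuously Fréchet differentiable. Let x* ∈ Ω, suppose F̂'(x*) := (F'(x*)+F'(x*)*)/2 has a bounded linear inverse, let R > 0 and κ := sup{t ∈ [0, R) : B(x*, t) ⊂ Ω}. If f : [0, R) → ℝ is twice continuously differentiable and ‖F̂'(x*)⁻¹‖ · ‖F''(x)‖ ≤ f''(‖x − x*‖) for all x ∈ B(x*, κ), then F and f satisfy the majorant condition: ‖F̂'(x*)⁻¹‖ · ‖F'(x) − F'(x* + τ(x − x*))‖ ≤ f'(‖x − x*‖) − f'(τ‖x − x*‖) for all τ ∈ [0, 1] and all x ∈ B(x*, κ). -/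
open RealInnerProductSpace Filter Metric Set

theorem second_derivative_bound_implies_majorant_condition {H : Type*} [NormedAddCommGroup H] [InnerProductSpace ℝ H] [CompleteSpace H]
    (Ω : Set H) (hΩ : IsOpen Ω) (F : H → H) (F' : H → H →L[ℝ] H)
    (F'' : H → H →L[ℝ] H →L[ℝ] H)
    (hFd : ∀ x ∈ Ω, HasFDerivAt F (F' x) x)
    (hFd2 : ∀ x ∈ Ω, HasFDerivAt F' (F'' x) x)
    (hF''c : ContinuousOn F'' Ω)
    (xs : H) (hxs : xs ∈ Ω)
    (Ahat : H →L[ℝ] H)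
    (hAhat : Ahat = (1 / 2 : ℝ) • (F' xs + ContinuousLinearMap.adjoint (F' xs)))
    (Ginv : H →L[ℝ] H)
    (hGinv1 : Ginv.comp Ahat = ContinuousLinearMap.id ℝ H)
    (hGinv2 : Ahat.comp Ginv = ContinuousLinearMap.id ℝ H)
    (R : ℝ) (hR : 0 < R) (κ : ℝ)
    (hκ : κ = sSup {u : ℝ | u ∈ Set.Ico (0 : ℝ) R ∧ Metric.ball xs u ⊆ Ω})
    (f f' f'' : ℝ → ℝ)
    (hfd1 : ∀ t ∈ Set.Ico (0 : ℝ) R, HasDerivWithinAt f (f' t) (Set.Ico (0 : ℝ) R) t)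
    (hfd2 : ∀ t ∈ Set.Ico (0 : ℝ) R, HasDerivWithinAt f' (f'' t) (Set.Ico (0 : ℝ) R) t)
    (hfc : ContinuousOn f'' (Set.Ico (0 : ℝ) R))
    (hf0 : f 0 = 0) (hf'0 : f' 0 = -1)
    (hfconv : ConvexOn ℝ (Set.Ico (0 : ℝ) R) f')
    (hfmono : StrictMonoOn f' (Set.Ico (0 : ℝ) R))
    (hbound : ∀ x ∈ Metric.ball xs κ, ‖Ginv‖ * ‖F'' x‖ ≤ f'' ‖x - xs‖) :
    ∀ τ ∈ Set.Icc (0 : ℝ) 1, ∀ x ∈ Metric.ball xs κ,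
      ‖Ginv‖ * ‖F' x - F' (xs + τ • (x - xs))‖ ≤ f' ‖x - xs‖ - f' (τ * ‖x - xs‖) := by

  intro τ hτ x hx
  set c := ‖Ginv‖ with hc
  have hc0 : 0 ≤ c := norm_nonneg _
  set r := ‖x - xs‖ with hr
  have hr0 : 0 ≤ r := norm_nonneg _
  have hxκ : r < κ := by rwa [mem_ball_iff_norm] at hx
  -- the ball of radius κ is contained in Ω
  have hS : ∀ u ∈ {u : ℝ | u ∈ Set.Ico (0 : ℝ) R ∧ Metric.ball xs u ⊆ Ω}, u < R :=
    fun u hu => hu.1.2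
  have hSne : ({u : ℝ | u ∈ Set.Ico (0 : ℝ) R ∧ Metric.ball xs u ⊆ Ω}).Nonempty := by
    refine ⟨0, ⟨⟨le_refl 0, hR⟩, ?_⟩⟩
    simp
  have hSbdd : BddAbove {u : ℝ | u ∈ Set.Ico (0 : ℝ) R ∧ Metric.ball xs u ⊆ Ω} :=
    ⟨R, fun u hu => le_of_lt (hS u hu)⟩
  have hballΩ : Metric.ball xs κ ⊆ Ω := by
    intro y hy
    rw [mem_ball_iff_norm] at hy
    rw [hκ] at hy
    obtain ⟨u, hu, hyu⟩ := exists_lt_of_lt_csSup hSne hy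
    exact hu.2 (by rwa [mem_ball_iff_norm])
  have hκR : κ ≤ R := by
    rw [hκ]; exact csSup_le hSne fun u hu => le_of_lt (hS u hu)
  have hrR : r < R := lt_of_lt_of_le hxκ hκR
  -- the path
  set u : ℝ → H := fun s => xs + s • (x - xs) with hu
  have hpath : ∀ s ∈ Set.Icc τ (1:ℝ), u s ∈ Metric.ball xs κ := by
    intro s hs
    have hs0 : 0 ≤ s := le_trans hτ.1 hs.1
    rw [mem_ball_iff_norm]
    have : u s - xs = s • (x - xs) := by simp [hu]
    rw [this, norm_smul, Real.norm_eq_abs, abs_of_nonneg hs0]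
    calc s * r ≤ 1 * r := by nlinarith [hs.2]
      _ = r := one_mul r
      _ < κ := hxκ
  have hsr : ∀ s ∈ Set.Icc τ (1:ℝ), ‖u s - xs‖ = s * r := by
    intro s hs
    have hs0 : 0 ≤ s := le_trans hτ.1 hs.1
    have : u s - xs = s • (x - xs) := by simp [hu]
    rw [this, norm_smul, Real.norm_eq_abs, abs_of_nonneg hs0]
  have hsrR : ∀ s ∈ Set.Icc τ (1:ℝ), s * r ∈ Set.Ico (0:ℝ) R := by
    intro s hs
    have hs0 : 0 ≤ s := le_trans hτ.1 hs.1
    constructor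
    · positivity
    · calc s * r ≤ 1 * r := by nlinarith [hs.2]
        _ = r := one_mul r
        _ < R := hrR
  -- vector-valued function along the path
  set g : ℝ → (H →L[ℝ] H) := fun s => c • F' (u s) - c • F' (u τ) with hg
  set g' : ℝ → (H →L[ℝ] H) := fun s => c • ((F'' (u s)) (x - xs)) with hg'
  have hτIcc : τ ∈ Set.Icc τ (1:ℝ) := ⟨le_refl τ, hτ.2⟩
  have hgderiv : ∀ s ∈ Set.Icc τ (1:ℝ), HasDerivAt g (g' s) s := by
    intro s hs
    have hu' : HasDerivAt u (x - xs) s := by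
      have : HasDerivAt (fun s : ℝ => s • (x - xs)) (x - xs) s := by
        simpa using (hasDerivAt_id s).smul_const (x - xs)
      simpa [hu] using this.const_add xs
    have hF' : HasFDerivAt F' (F'' (u s)) (u s) := hFd2 (u s) (hballΩ (hpath s hs))
    have := (hF'.comp_hasDerivAt s hu').const_smul c
    exact (this.sub_const (c • F' (u τ)))
  -- boundary function
  set B : ℝ → ℝ := fun s => f' (s * r) - f' (τ * r) with hB
  set B' : ℝ → ℝ := fun s => f'' (s * r) * r with hB'
  have hBderiv : ∀ s ∈ Set.Icc τ (1:ℝ), HasDerivWithinAt B (B' s) (Set.Icc τ 1) s := by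
    intro s hs
    have hmul : HasDerivWithinAt (fun s : ℝ => s * r) r (Set.Icc τ 1) s :=
      (hasDerivWithinAt_id s _).mul_const r |>.congr_deriv (by ring)
    have hmaps : Set.MapsTo (fun s : ℝ => s * r) (Set.Icc τ 1) (Set.Ico (0:ℝ) R) :=
      fun t ht => hsrR t ht
    have := (hfd2 (s * r) (hsrR s hs)).comp s hmul hmaps
    exact (this.sub_const (f' (τ * r)))
  -- apply the fencing theorem
  have key : ∀ s ∈ Set.Icc τ (1:ℝ), ‖g s‖ ≤ B s := by
    refine image_norm_le_of_norm_deriv_right_le_deriv_boundary'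
      (f' := g') (fun s hs => (hgderiv s hs).continuousAt.continuousWithinAt)
      (fun s hs => (hgderiv s (Set.Ico_subset_Icc_self hs)).hasDerivWithinAt)
      ?_ (fun s hs => (hBderiv s hs).continuousWithinAt)
      (fun s hs => ((hBderiv s (Set.Ico_subset_Icc_self hs)).mono_of_mem_nhdsWithin
        (Icc_mem_nhdsGE_of_mem hs))) ?_
    · simp [hg, hB]
    · intro s hs
      have hsI := Set.Ico_subset_Icc_self hs
      have hb := hbound (u s) (hpath s hsI)
      rw [hsr s hsI] at hb
      have h1 : ‖g' s‖ ≤ c * ‖F'' (u s)‖ * r := by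
        have heq : ‖g' s‖ = c * ‖(F'' (u s)) (x - xs)‖ := by
          show ‖c • (F'' (u s)) (x - xs)‖ = _
          rw [norm_smul c ((F'' (u s)) (x - xs)), Real.norm_eq_abs, abs_of_nonneg hc0]
        rw [heq]
        have := (F'' (u s)).le_opNorm (x - xs)
        calc c * ‖(F'' (u s)) (x - xs)‖ ≤ c * (‖F'' (u s)‖ * r) := by
              apply mul_le_mul_of_nonneg_left _ hc0
              simpa [hr] using this
          _ = c * ‖F'' (u s)‖ * r := by ring
      calc ‖g' s‖ ≤ c * ‖F'' (u s)‖ * r := h1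
        _ ≤ f'' (s * r) * r := mul_le_mul_of_nonneg_right hb hr0
        _ = B' s := rfl
  have h1 : ‖c • F' (u 1) - c • F' (u τ)‖ ≤ f' (1 * r) - f' (τ * r) := key 1 ⟨hτ.2, le_refl 1⟩
  have hu1 : u 1 = x := by simp [hu]
  rw [hu1, one_mul] at h1
  have hnorm : ‖c • F' x - c • F' (u τ)‖ = c * ‖F' x - F' (u τ)‖ := by
    rw [← smul_sub, norm_smul c (F' x - F' (u τ)), Real.norm_eq_abs, abs_of_nonneg hc0]
  rw [hnorm] at h1
  simpa [hu, hr] using h1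
end
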